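/- arXiv:1312.0687 — 6 statements merged into one kernel-verified Lean document; each statement's English description precedes it below -/
import Mathlib

section
/- Every rational point P of the elliptic curve E : y² = x³ − 1 over the finite field F₂₅ with 25 elements satisfies 6 • P = O; that is, E(F₂₅) is contained in the kernel of multiplication by 5 + 1 = 6. -/
/-!
Every rational point `P` of the elliptic curve `E : y² = x³ − 1` over the finite field
`F₂₅` with 25 elements satisfies `6 • P = O`; that is, `E(F₂₅)` is contained in the
kernel of multiplication by `5 + 1 = 6`.
-/

instance : Fact (Nat.Prime 5) := ⟨by norm_num⟩

/-- The finite field with 25 elements. -/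
abbrev F25 : Type := GaloisField 5 2

/-- The elliptic curve `y² = x³ − 1` (in affine Weierstrass form) over `F₂₅`. -/
noncomputable def E : WeierstrassCurve.Affine F25 :=
  { a₁ := 0, a₂ := 0, a₃ := 0, a₄ := 0, a₆ := -1 }

/-!
For a point `P = (x, y)` with `y ≠ 0`, `6 • P = 0` says that `2 • P` is `3`-torsion, i.e. that
`x(2P)` is a root of the `3`-division polynomial `ψ₃ = 3X(X³ + 1)` of `E`. In terms of `u = x³`
this amounts to `x (u - 2) (u + 1) (u + 2) (u² - 2) = 0`. Now `u` is a cube in `F₂₅`, so it is a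
root of `u⁹ - u = u (u - 1) (u + 1) (u - 2) (u + 2) (u² - 2) (u² + 2)`; the factor `u - 1 = y²`
is nonzero, and `u² = -2` is excluded because `u - 1` would then have norm `-2`, which is not a
square in `F₅`.
-/

open Polynomial

namespace WeierstrassCurve.Affine

variable {F : Type*} [Field F] [DecidableEq F] {W : Affine F}

lemma sub_addX_slope_self_mul_sq {x y : F} (h : W.Equation x y) (hy : y ≠ W.negY x y) :
    (x - W.addX x x (W.slope x x y y)) * (y - W.negY x y) ^ 2 = W.Ψ₃.eval x := by
  have hD : y - W.negY x y = 2 * y + W.a₁ * x + W.a₃ := by rw [negY]; ring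
  have hL : W.slope x x y y * (2 * y + W.a₁ * x + W.a₃) =
      3 * x ^ 2 + 2 * W.a₂ * x + W.a₄ - W.a₁ * y := by
    rw [slope_of_Y_ne rfl hy, ← hD, div_mul_cancel₀ _ (sub_ne_zero.mpr hy)]
  rw [equation_iff] at h
  rw [hD]
  simp only [addX, Ψ₃, b₂, b₄, b₆, b₈, eval_add, eval_mul, eval_pow, eval_X, eval_C, eval_ofNat]
  linear_combination (-(W.slope x x y y * (2 * y + W.a₁ * x + W.a₃)) -
      (3 * x ^ 2 + 2 * W.a₂ * x + W.a₄ - W.a₁ * y) - W.a₁ * (2 * y + W.a₁ * x + W.a₃)) * hL +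
    (12 * x + W.a₁ ^ 2 + 4 * W.a₂) * h

namespace Point

lemma add_self_eq_neg_of_eval_Ψ₃ {x y : F} {h : W.Nonsingular x y} (hy : y ≠ W.negY x y)
    (hψ : W.Ψ₃.eval x = 0) : some x y h + some x y h = -some x y h := by
  have hx : W.addX x x (W.slope x x y y) = x := by
    have := sub_addX_slope_self_mul_sq h.1 hy
    rw [hψ, mul_eq_zero, sub_eq_zero] at this
    exact (this.resolve_right (pow_ne_zero 2 (sub_ne_zero.mpr hy))).symm
  rw [add_self_of_Y_ne hy, neg_some, some.injEq, addY, negAddY, hx, sub_self, mul_zero, zero_add]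
  exact ⟨rfl, rfl⟩

lemma three_smul_eq_zero_of_eval_Ψ₃ {x y : F} {h : W.Nonsingular x y} (hy : y ≠ W.negY x y)
    (hψ : W.Ψ₃.eval x = 0) : 3 • some x y h = 0 := by
  rw [succ_nsmul, two_nsmul, add_self_eq_neg_of_eval_Ψ₃ hy hψ, neg_add_cancel]

end Point

end WeierstrassCurve.Affine

section CharFive

variable {R : Type*} [CommRing R] [CharP R 5]

lemma pow_nine_sub_self_eq_mul (u : R) :
    u ^ 9 - u = u * (u - 1) * (u + 1) * (u - 2) * (u + 2) * (u ^ 2 - 2) * (u ^ 2 + 2) := by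
  linear_combination (3 * u - 4 * u ^ 3 + u ^ 7) * CharP.ofNat_eq_zero R 5

lemma sub_one_pow_twelve_eq_neg_one_of_sq_eq_neg_two {u : R} (h : u ^ 2 = -2) :
    (u - 1) ^ 12 = -1 := by
  have h5 := CharP.ofNat_eq_zero R 5
  have hu5 : u ^ 5 = -u := by linear_combination (u ^ 3 - 2 * u) * h + u * h5
  calc (u - 1) ^ 12 = ((u - 1) * (u - 1) ^ 5) ^ 2 := by ring
    _ = ((u - 1) * (-u - 1)) ^ 2 := by rw [sub_pow_char, one_pow, hu5]
    _ = -1 := by linear_combination (u ^ 2 - 4) * h + 2 * h5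

end CharFive

namespace F25

lemma two_ne_zero : (2 : F25) ≠ 0 := by
  exact_mod_cast (CharP.cast_eq_zero_iff F25 5 2).not.mpr (by norm_num)

lemma pow_card (x : F25) : x ^ 25 = x := by
  have : Fintype F25 := Fintype.ofFinite F25
  have hcard : Fintype.card F25 = 25 := by
    rw [← Nat.card_eq_fintype_card, GaloisField.card 5 2 (by norm_num)]
    norm_num
  simpa [hcard] using FiniteField.pow_card x

lemma x_mul_eq_zero_of_sq_eq {x y : F25} (h : y ^ 2 = x ^ 3 - 1) (hy : y ≠ 0) :
    x * ((x ^ 3 - 2) * (x ^ 3 + 1) * (x ^ 3 + 2) * (x ^ 6 - 2)) = 0 := by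
  have hcube : (x ^ 3) ^ 9 - x ^ 3 = 0 := by
    calc (x ^ 3) ^ 9 - x ^ 3 = x ^ 25 * x ^ 2 - x ^ 3 := by ring
      _ = 0 := by rw [pow_card]; ring
  have hsq : (x ^ 3 - 1) ^ 12 = 1 := by
    rw [← h, ← pow_mul]
    refine mul_left_cancel₀ hy ?_
    rw [← pow_succ', pow_card, mul_one]
  have hx1 : x ^ 3 - 1 ≠ 0 := by rw [← h]; exact pow_ne_zero 2 hy
  have hx2 : (x ^ 3) ^ 2 + 2 ≠ 0 := fun h2 ↦ by
    have := sub_one_pow_twelve_eq_neg_one_of_sq_eq_neg_two (eq_neg_of_add_eq_zero_left h2)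
    rw [hsq, ← sub_eq_zero, sub_neg_eq_add, one_add_one_eq_two] at this
    exact two_ne_zero this
  rw [pow_nine_sub_self_eq_mul] at hcube
  have : x ^ 3 * ((x ^ 3 - 2) * (x ^ 3 + 1) * (x ^ 3 + 2) * (x ^ 6 - 2)) *
      ((x ^ 3 - 1) * ((x ^ 3) ^ 2 + 2)) = 0 := by linear_combination hcube
  rcases mul_eq_zero.1 ((mul_eq_zero.1 this).resolve_right (mul_ne_zero hx1 hx2)) with h0 | h0
  · rw [pow_eq_zero_iff three_ne_zero |>.1 h0, zero_mul]
  · rw [h0, mul_zero]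

end F25

open WeierstrassCurve WeierstrassCurve.Affine WeierstrassCurve.Affine.Point

lemma equation_E_iff {x y : F25} : E.Equation x y ↔ y ^ 2 = x ^ 3 - 1 := by
  rw [equation_iff]
  simp only [E]
  constructor <;> intro h <;> linear_combination h

lemma negY_E (x y : F25) : E.negY x y = -y := by
  simp [negY, E]

lemma eval_Ψ₃_E (x : F25) : E.Ψ₃.eval x = 3 * x * (x ^ 3 + 1) := by
  simp only [Ψ₃, b₂, b₄, b₆, b₈, E, eval_add, eval_mul, eval_pow, eval_X, eval_C, eval_ofNat]
  linear_combination (-3 * x) * CharP.ofNat_eq_zero F25 5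

lemma Y_ne_negY_E_iff {x y : F25} : y ≠ E.negY x y ↔ y ≠ 0 := by
  rw [negY_E, not_iff_not, eq_neg_iff_add_eq_zero, ← two_mul, mul_eq_zero,
    or_iff_right F25.two_ne_zero]

lemma eval_Ψ₃_E_addX_slope_self [DecidableEq F25] {x y : F25} (h : E.Equation x y)
    (hy : y ≠ 0) : E.Ψ₃.eval (E.addX x x (E.slope x x y y)) = 0 := by
  set a := E.addX x x (E.slope x x y y)
  have h5 := CharP.ofNat_eq_zero F25 5
  have hdbl := sub_addX_slope_self_mul_sq h (Y_ne_negY_E_iff.2 hy)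
  rw [negY_E, eval_Ψ₃_E] at hdbl
  rw [equation_E_iff] at h
  have ha : a * y ^ 2 = -x * (x ^ 3 - 2) := by
    linear_combination hdbl - 4 * x * h + (a * y ^ 2 + x) * h5
  refine (mul_eq_zero.1 ?_).resolve_right (pow_ne_zero 8 hy)
  calc E.Ψ₃.eval a * y ^ 8 = 3 * (a * y ^ 2) * ((a * y ^ 2) ^ 3 + (y ^ 2) ^ 3) := by
        rw [eval_Ψ₃_E]; ring
    _ = 3 * (-x * (x ^ 3 - 2)) * ((-x * (x ^ 3 - 2)) ^ 3 + (x ^ 3 - 1) ^ 3) := by rw [ha, h]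
    -- `u (u - 2)³ - (u - 1)³ = (u + 1) (u + 2) (u² - 2) + 5 (-2u³ + 3u² - u + 1)`
    _ = 0 := by
      linear_combination 3 * F25.x_mul_eq_zero_of_sq_eq h hy +
        3 * x * (x ^ 3 - 2) * (-2 * x ^ 9 + 3 * x ^ 6 - x ^ 3 + 1) * h5

lemma Y_ne_negY_E_of_eval_Ψ₃ {x y : F25} (h : E.Equation x y) (hψ : E.Ψ₃.eval x = 0) :
    y ≠ E.negY x y := by
  rw [Y_ne_negY_E_iff]
  rintro rfl
  rw [equation_E_iff] at h
  rw [eval_Ψ₃_E] at hψ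
  have h6x : 6 * x = 0 := by linear_combination hψ + 3 * x * h
  have hx : x = 0 := by linear_combination h6x - x * CharP.ofNat_eq_zero F25 5
  rw [hx] at h
  norm_num at h

open Classical in
theorem six_smul_eq_zero_of_E_over_F25 (P : E.Point) : (5 + 1) • P = 0 := by
  have h6 : (5 + 1) • P = 3 • (P + P) := by rw [← two_nsmul, smul_smul]; rfl
  rcases P with _ | @⟨x, y, h⟩
  · rfl
  rw [h6]
  by_cases hy : y = 0
  · rw [add_self_of_Y_eq (by rw [negY_E, hy, _root_.neg_zero]), smul_zero]
  · have hy' : y ≠ E.negY x y := Y_ne_negY_E_iff.2 hy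
    have h2P := nonsingular_add h h fun hxy ↦ hy' hxy.2
    have hψ := eval_Ψ₃_E_addX_slope_self h.1 hy
    rw [add_self_of_Y_ne hy']
    exact three_smul_eq_zero_of_eval_Ψ₃ (Y_ne_negY_E_of_eval_Ψ₃ h2P.1 hψ) hψ
end

section
/- Let k be a field of characteristic 5 and let s ∈ k satisfy s² = 2. If x, y ∈ k satisfy y² = x³ − 1 and x ≠ 1, then the elements u = (2x² + 3x + 1)/(x − 1) and v = 2·s·y·(x² + 3x + 3)/(x − 1)² satisfy v² = u³ − 1. (Thus these formulas define a degree-2 isogeny φ_{E,2} from the curve y² = x³ − 1 to itself.) -/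
/-!
Since `s² = 2` and `y² = x³ − 1 = (x − 1)(x² + x + 1)`, we get
`v² = 8(x² + x + 1)(x² + 3x + 3)² / (x − 1)³`, while `u³ − 1 = ((2x² + 3x + 1)³ − (x − 1)³) / (x − 1)³`.
So everything reduces to a polynomial identity in `x` that holds modulo 5.
-/

theorem cube_sub_cube_eq_of_charP_five {R : Type*} [CommRing R] [CharP R 5] (x : R) :
    (2 * x ^ 2 + 3 * x + 1) ^ 3 - (x - 1) ^ 3 = 8 * (x ^ 2 + x + 1) * (x ^ 2 + 3 * x + 3) ^ 2 := by
  have h5 : (5 : R) = 0 := by exact_mod_cast CharP.cast_eq_zero R 5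
  linear_combination -(4 * x ^ 5 + 22 * x ^ 4 + 50 * x ^ 3 + 60 * x ^ 2 + 42 * x + 14) * h5

theorem phi_E2_maps_curve_to_curve {k : Type*} [Field k] [CharP k 5]
    (s : k) (hs : s ^ 2 = 2) (x y : k) (hxy : y ^ 2 = x ^ 3 - 1) (hx : x ≠ 1) :
    (2 * s * y * (x ^ 2 + 3 * x + 3) / (x - 1) ^ 2) ^ 2 =
      ((2 * x ^ 2 + 3 * x + 1) / (x - 1)) ^ 3 - 1 := by
  have hx1 : x - 1 ≠ 0 := sub_ne_zero.mpr hx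
  rw [div_pow, div_pow, div_sub_one (pow_ne_zero 3 hx1), cube_sub_cube_eq_of_charP_five,
    div_eq_div_iff (pow_ne_zero 2 (pow_ne_zero 2 hx1)) (pow_ne_zero 3 hx1)]
  linear_combination (4 * y ^ 2 * (x ^ 2 + 3 * x + 3) ^ 2 * (x - 1) ^ 3) * hs
    + (8 * (x ^ 2 + 3 * x + 3) ^ 2 * (x - 1) ^ 3) * hxy
end

section
/- Let K be a field of characteristic 5 and let a, b, c ∈ K satisfy a²⁵ = a, b²⁵ = b, c²⁵ = c (i.e. a, b, c lie in the subfield F₂₅), (a, b, c) ≠ (0, 0, 0), and a⁶ + b⁶ + c⁶ = 0. If x, y, z ∈ K satisfy x⁶ + y⁶ + z⁶ = 0 and a⁵x + b⁵y + c⁵z = 0 with (x, y, z) ≠ (0, 0, 0), then (x, y, z) is proportional to (a, b, c): there exists λ ∈ K with x = λa, y = λb, z = λc. (The tangent line to the Fermat sextic at an F₂₅-rational point meets the curve only at the point of tangency.) -/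
/-!
Over `𝔽_{p²}` the Fermat curve of degree `p + 1` is the Hermitian curve, and for `a, b` fixed by
the square of Frobenius one has the Hermitian identity
`(a^p x + b^p y)^(p+1) + (a y - b x)^(p+1) = (a^(p+1) + b^(p+1)) (x^(p+1) + y^(p+1))`.
For a point `(x, y, z)` of the curve on the tangent line at `(a, b, c)`, the right-hand side is
`c^(p+1) z^(p+1)` and the first term is `(c^p z)^(p+1) = c^(p+1) z^(p+1)`, so the minor `a y - b x`
vanishes. By symmetry all `2 × 2` minors of `(a, b, c), (x, y, z)` vanish, which makes the two
vectors proportional.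
-/

section Hermitian

variable {K : Type*} {p : ℕ}

theorem hermitian_identity [CommRing K] [ExpChar K p] {a b : K}
    (ha : a ^ p ^ 2 = a) (hb : b ^ p ^ 2 = b) (x y : K) :
    (a ^ p * x + b ^ p * y) ^ (p + 1) + (a * y - b * x) ^ (p + 1) =
      (a ^ (p + 1) + b ^ (p + 1)) * (x ^ (p + 1) + y ^ (p + 1)) := by
  have hadd : (a ^ p * x + b ^ p * y) ^ p = a * x ^ p + b * y ^ p := by
    rw [add_pow_expChar, mul_pow, mul_pow, ← pow_mul, ← pow_mul, ← sq, ha, hb]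
  have hsub : (a * y - b * x) ^ p = a ^ p * y ^ p - b ^ p * x ^ p := by
    rw [sub_pow_expChar, mul_pow, mul_pow]
  rw [pow_succ, pow_succ, hadd, hsub]
  ring

theorem mul_eq_mul_of_mem_tangent_hermitian [CommRing K] [IsReduced K] [ExpChar K p]
    {a b c x y z : K}
    (ha : a ^ p ^ 2 = a) (hb : b ^ p ^ 2 = b) (hc : c ^ p ^ 2 = c)
    (hF : a ^ (p + 1) + b ^ (p + 1) + c ^ (p + 1) = 0)
    (hFx : x ^ (p + 1) + y ^ (p + 1) + z ^ (p + 1) = 0)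
    (hT : a ^ p * x + b ^ p * y + c ^ p * z = 0) :
    a * y = b * x := by
  have hw : a ^ p * x + b ^ p * y = -(c ^ p * z) := by linear_combination hT
  have hwp : (a ^ p * x + b ^ p * y) ^ p = -(c * z ^ p) := by
    rw [hw, neg_pow, neg_one_pow_expChar, mul_pow, ← pow_mul, ← sq, hc, neg_one_mul]
  have hcz : (a ^ p * x + b ^ p * y) ^ (p + 1) = c ^ (p + 1) * z ^ (p + 1) := by
    rw [pow_succ, hwp, hw]
    ring
  have hminor : (a * y - b * x) ^ (p + 1) = 0 := by
    linear_combination hermitian_identity ha hb x y - hcz + (x ^ (p + 1) + y ^ (p + 1)) * hF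
      - c ^ (p + 1) * hFx
  exact sub_eq_zero.mp (IsNilpotent.eq_zero ⟨_, hminor⟩)

end Hermitian

theorem exists_eq_mul_of_minors_eq_zero {K : Type*} [Field K] {a b c x y z : K}
    (habc : (a, b, c) ≠ (0, 0, 0)) (hab : a * y = b * x) (hbc : b * z = c * y)
    (hca : c * x = a * z) :
    ∃ l : K, x = l * a ∧ y = l * b ∧ z = l * c := by
  by_cases ha : a = 0
  · by_cases hb : b = 0
    · have hc : c ≠ 0 := fun hc => habc (by rw [ha, hb, hc])
      refine ⟨z / c, ?_, ?_, ?_⟩ <;> field_simp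
      · linear_combination hca
      · linear_combination -hbc
    · refine ⟨y / b, ?_, ?_, ?_⟩ <;> field_simp
      · linear_combination -hab
      · linear_combination hbc
  · refine ⟨x / a, ?_, ?_, ?_⟩ <;> field_simp
    · linear_combination hab
    · linear_combination -hca

theorem tangent_line_meets_fermat_sextic_only_at_tangency_general {K : Type*} [Field K]
    [CharP K 5] (a b c : K) (ha : a ^ 25 = a) (hb : b ^ 25 = b) (hc : c ^ 25 = c)
    (habc : (a, b, c) ≠ (0, 0, 0)) (hF : a ^ 6 + b ^ 6 + c ^ 6 = 0)
    (x y z : K) (hFx : x ^ 6 + y ^ 6 + z ^ 6 = 0)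
    (hT : a ^ 5 * x + b ^ 5 * y + c ^ 5 * z = 0) :
    ∃ l : K, x = l * a ∧ y = l * b ∧ z = l * c := by
  have : Fact (Nat.Prime 5) := ⟨by norm_num⟩
  refine exists_eq_mul_of_minors_eq_zero habc ?_ ?_ ?_
  · exact mul_eq_mul_of_mem_tangent_hermitian (p := 5) ha hb hc hF hFx hT
  · exact mul_eq_mul_of_mem_tangent_hermitian (p := 5) (x := y) (y := z) (z := x) hb hc ha
      (by linear_combination hF) (by linear_combination hFx) (by linear_combination hT)
  · exact mul_eq_mul_of_mem_tangent_hermitian (p := 5) (x := z) (y := x) (z := y) hc ha hb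
      (by linear_combination hF) (by linear_combination hFx) (by linear_combination hT)

theorem tangent_line_meets_fermat_sextic_only_at_tangency {K : Type*} [Field K]
    [CharP K 5] (a b c : K) (ha : a ^ 25 = a) (hb : b ^ 25 = b) (hc : c ^ 25 = c)
    (habc : (a, b, c) ≠ (0, 0, 0)) (hF : a ^ 6 + b ^ 6 + c ^ 6 = 0)
    (x y z : K) (hxyz : (x, y, z) ≠ (0, 0, 0)) (hFx : x ^ 6 + y ^ 6 + z ^ 6 = 0)
    (hT : a ^ 5 * x + b ^ 5 * y + c ^ 5 * z = 0) :
    ∃ l : K, x = l * a ∧ y = l * b ∧ z = l * c :=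
  tangent_line_meets_fermat_sextic_only_at_tangency_general a b c ha hb hc habc hF x y z hFx hT
end

section
/- Let k be a field of characteristic 5. If u, v ∈ k satisfy v² = u⁶ − 1 and u³ ≠ 1, then (v·(2u³ + 1)/(u³ − 1)²)² = (2u/(u³ − 1))³ − 1. (Thus the formulas (u, v) ↦ (2u/(u³ − 1), v·(2u³ + 1)/(u³ − 1)²) define a degree-3 morphism φ_{F,3} from the genus-2 hyperelliptic curve F : v² = u⁶ − 1 to the elliptic curve E : y² = x³ − 1.) -/
/-!
Put `t = u³`. Clearing the denominator `(t - 1)⁴` and substituting `v² = (t - 1)(t + 1)`, the claim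
becomes `(t + 1)(2t + 1)² = 8t - (t - 1)³`, whose two sides differ by `5t²(t + 1)`.
-/

theorem add_one_mul_two_mul_add_one_sq_of_charP_five {R : Type*} [CommRing R] [CharP R 5]
    (t : R) : (t + 1) * (2 * t + 1) ^ 2 = 8 * t - (t - 1) ^ 3 := by
  linear_combination t ^ 2 * (t + 1) * CharP.cast_eq_zero R 5

theorem phi_F3_maps_F_to_E {k : Type*} [Field k] [CharP k 5]
    (u v : k) (huv : v ^ 2 = u ^ 6 - 1) (hu : u ^ 3 ≠ 1) :
    (v * (2 * u ^ 3 + 1) / (u ^ 3 - 1) ^ 2) ^ 2 =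
      (2 * u / (u ^ 3 - 1)) ^ 3 - 1 := by
  have hd : u ^ 3 - 1 ≠ 0 := sub_ne_zero.mpr hu
  field_simp
  linear_combination (2 * u ^ 3 + 1) ^ 2 * huv +
    (u ^ 3 - 1) * add_one_mul_two_mul_add_one_sq_of_charP_five (u ^ 3)
end

section
/- Let k be a field of characteristic 5 and let s ∈ k satisfy s² = 2. If u, v ∈ k satisfy v² = u⁶ − 1 and u + 2s ≠ 0, then setting u′ = (2s·u + 4)/(u + 2s) and v′ = v/(u + 2s)³ one has v′² = u′⁶ − 1. (Thus the formulas define an automorphism h_F of the hyperelliptic curve F : v² = u⁶ − 1.) -/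
/-!
Clearing the denominator `(u + 2s)⁶`, the claim is the polynomial identity
`(2su + 4)⁶ − (u + 2s)⁶ = u⁶ − 1`. In characteristic 5 the Frobenius gives
`(a + b)⁶ = (a⁵ + b⁵)(a + b)`, and with `s⁵ = 4s` both sixth powers collapse to
`2u⁶ + 2su⁵ + 3su + 1` and `u⁶ + 2su⁵ + 3su + 2`.
-/

theorem add_pow_succ_eq_of_charP {R : Type*} [CommSemiring R] (p : ℕ) [Fact p.Prime]
    [CharP R p] (x y : R) : (x + y) ^ (p + 1) = (x ^ p + y ^ p) * (x + y) := by
  rw [pow_succ, add_pow_char]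

theorem pow_six_sub_pow_six_of_charP_five {k : Type*} [CommRing k] [CharP k 5]
    (s : k) (hs : s ^ 2 = 2) (u : k) :
    (2 * s * u + 4) ^ 6 - (u + 2 * s) ^ 6 = u ^ 6 - 1 := by
  have : Fact (Nat.Prime 5) := ⟨Nat.prime_five⟩
  have h5 : (5 : k) = 0 := by exact_mod_cast CharP.cast_eq_zero k 5
  have hs5 : s ^ 5 = 4 * s := by linear_combination (s ^ 3 + 2 * s) * hs
  have hnum : (2 * s * u + 4) ^ 6 = 2 * u ^ 6 + 2 * s * u ^ 5 + 3 * s * u + 1 := by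
    linear_combination add_pow_succ_eq_of_charP 5 (2 * s * u) 4
      + (64 * s * u ^ 6 + 128 * u ^ 5) * hs5 + 256 * u ^ 6 * hs
      + (102 * u ^ 6 + 102 * s * u ^ 5 + 409 * s * u + 819) * h5
  have hden : (u + 2 * s) ^ 6 = u ^ 6 + 2 * s * u ^ 5 + 3 * s * u + 2 := by
    linear_combination add_pow_succ_eq_of_charP 5 u (2 * s)
      + (32 * u + 64 * s) * hs5 + 256 * hs + (25 * s * u + 102) * h5
  rw [hnum, hden]
  ring

theorem hF_maps_F_to_F {k : Type*} [Field k] [CharP k 5]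
    (s : k) (hs : s ^ 2 = 2) (u v : k) (huv : v ^ 2 = u ^ 6 - 1)
    (hu : u + 2 * s ≠ 0) :
    (v / (u + 2 * s) ^ 3) ^ 2 = ((2 * s * u + 4) / (u + 2 * s)) ^ 6 - 1 := by
  rw [div_pow, div_pow, div_sub_one (pow_ne_zero 6 hu),
    pow_six_sub_pow_six_of_charP_five s hs u, huv, ← pow_mul]
end

section
/- Let M be the 4 × 4 integer matrix with rows (−2, −1, 0, 1), (−1, −2, −1, 0), (0, −1, −4, −2), (1, 0, −2, −4). Then the set of 4 × 4 integer matrices U satisfying U · M · Uᵀ = M has exactly 72 elements. (That is, the orthogonal group of the even negative-definite lattice R of rank 4 and discriminant 25 with Gram matrix M has order 72.) -/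
/-!
Let `M` be the 4 × 4 integer matrix with rows `(−2, −1, 0, 1)`, `(−1, −2, −1, 0)`,
`(0, −1, −4, −2)`, `(1, 0, −2, −4)`.  Then the set of 4 × 4 integer matrices `U`
satisfying `U · M · Uᵀ = M` has exactly 72 elements.  (That is, the orthogonal group
of the even negative-definite lattice `R` of rank 4 and discriminant 25 with Gram
matrix `M` has order 72.)
-/

open Matrix

/-- The Gram matrix of the even negative-definite lattice `R` of rank 4 with
discriminant 25. -/
def M : Matrix (Fin 4) (Fin 4) ℤ :=
  !![-2, -1, 0, 1;
     -1, -2, -1, 0;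
     0, -1, -4, -2;
     1, 0, -2, -4]

/-!
The rows `uᵢ` of an isometry `U` satisfy `uᵢ ⬝ᵥ M *ᵥ uⱼ = M i j`; in particular they have norm
`-2` or `-4`. Since `-M` is positive definite and the diagonal of `(-M)⁻¹` is `(4, 4, 2, 2) / 5`,
Cauchy–Schwarz confines every vector of norm at least `-4` to `{-1, 0, 1}⁴`. Choosing the rows one
at a time among these finitely many vectors, each compatible with the rows already chosen, leaves
a search small enough for the kernel, and it finds 72 isometries.
-/

namespace Matrix

variable {n R : Type*} [Fintype n]

theorem IsSymm.dotProduct_mulVec_comm [CommSemiring R] {A : Matrix n n R} (hA : A.IsSymm)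
    (v w : n → R) : v ⬝ᵥ A *ᵥ w = w ⬝ᵥ A *ᵥ v := by
  rw [dotProduct_mulVec, ← mulVec_transpose, hA.eq, dotProduct_comm]

theorem IsSymm.mul_mul_transpose_eq_iff [LinearOrder n] [CommSemiring R] {A : Matrix n n R}
    (hA : A.IsSymm) (U : Matrix n n R) :
    U * A * Uᵀ = A ↔ ∀ i j, i ≤ j → U i ⬝ᵥ A *ᵥ U j = A i j := by
  simp only [← Matrix.ext_iff, mul_mul_apply, transpose_transpose]
  refine ⟨fun h i j _ ↦ h i j, fun h i j ↦ ?_⟩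
  rcases le_total i j with hij | hji
  · exact h i j hij
  · rw [hA.dotProduct_mulVec_comm, h j i hji, hA.apply]

end Matrix

lemma isSymm_M : M.IsSymm := by decide

lemma dotProduct_M_mulVec_self (v : Fin 4 → ℤ) :
    v ⬝ᵥ M *ᵥ v = -(2 * v 0 ^ 2 + 2 * v 1 ^ 2 + 4 * v 2 ^ 2 + 4 * v 3 ^ 2
      + 2 * v 0 * v 1 + 2 * v 1 * v 2 + 4 * v 2 * v 3 - 2 * v 0 * v 3) := by
  simp only [dotProduct, mulVec, M, of_apply, cons_val', cons_val_fin_one, Fin.sum_univ_four,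
    cons_val_zero, cons_val_one, cons_val]
  ring

def unitBox : Finset (Fin 4 → ℤ) :=
  Fintype.piFinset fun _ ↦ {-1, 0, 1}

lemma mem_unitBox_of_neg_four_le {v : Fin 4 → ℤ} (hv : -4 ≤ v ⬝ᵥ M *ᵥ v) : v ∈ unitBox := by
  have small : ∀ a : ℤ, 5 * a ^ 2 ≤ 16 → a ∈ ({-1, 0, 1} : Finset ℤ) := by
    intro a ha
    have : -1 ≤ a ∧ a ≤ 1 := ⟨by nlinarith, by nlinarith⟩
    simp only [Finset.mem_insert, Finset.mem_singleton]
    omega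
  rw [dotProduct_M_mulVec_self] at hv
  -- Each hint list certifies `v i ^ 2 ≤ ((-M)⁻¹) i i * -(v ⬝ᵥ M *ᵥ v)`.
  have h₀ : 5 * v 0 ^ 2 ≤ 16 := by
    nlinarith [sq_nonneg (3 * v 0 + 4 * v 1 - 4 * v 3), sq_nonneg (2 * v 1 + 3 * v 2 + 4 * v 3),
      sq_nonneg (v 2)]
  have h₁ : 5 * v 1 ^ 2 ≤ 16 := by
    nlinarith [sq_nonneg (2 * v 0 + v 1 - v 3), sq_nonneg (v 1 + 4 * v 2 + 2 * v 3),
      sq_nonneg (v 3)]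
  have h₂ : 5 * v 2 ^ 2 ≤ 16 := by
    nlinarith [sq_nonneg (2 * v 0 + v 1 - v 3), sq_nonneg (3 * v 1 + 2 * v 2 + v 3),
      sq_nonneg (v 2 + 2 * v 3)]
  have h₃ : 5 * v 3 ^ 2 ≤ 16 := by
    nlinarith [sq_nonneg (2 * v 0 + v 1 - v 3), sq_nonneg (3 * v 1 + 2 * v 2 + v 3),
      sq_nonneg (2 * v 2 + v 3)]
  rw [unitBox, Fintype.mem_piFinset]
  intro i
  fin_cases i <;> apply small <;> assumption

/-- Every vector of norm `q` only when `-4 ≤ q` (`mem_vectorsOfNorm`). -/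
def vectorsOfNorm (q : ℤ) : Finset (Fin 4 → ℤ) :=
  unitBox.filter fun v ↦ v ⬝ᵥ M *ᵥ v = q

lemma mem_vectorsOfNorm {q : ℤ} (hq : -4 ≤ q) {v : Fin 4 → ℤ} :
    v ∈ vectorsOfNorm q ↔ v ⬝ᵥ M *ᵥ v = q := by
  simp only [vectorsOfNorm, Finset.mem_filter, and_iff_right_iff_imp]
  intro hv
  exact mem_unitBox_of_neg_four_le (hv ▸ hq)

/-- Rows are chosen one at a time, each compatible with the previous ones, which keeps
`card_isometries` within reach of `decide`. -/
def isometries : Finset (Matrix (Fin 4) (Fin 4) ℤ) :=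
  (vectorsOfNorm (M 0 0)).biUnion fun r₀ ↦
  ((vectorsOfNorm (M 1 1)).filter fun r₁ ↦ r₀ ⬝ᵥ M *ᵥ r₁ = M 0 1).biUnion fun r₁ ↦
  ((vectorsOfNorm (M 2 2)).filter fun r₂ ↦
    r₀ ⬝ᵥ M *ᵥ r₂ = M 0 2 ∧ r₁ ⬝ᵥ M *ᵥ r₂ = M 1 2).biUnion fun r₂ ↦
  ((vectorsOfNorm (M 3 3)).filter fun r₃ ↦
    r₀ ⬝ᵥ M *ᵥ r₃ = M 0 3 ∧ r₁ ⬝ᵥ M *ᵥ r₃ = M 1 3 ∧ r₂ ⬝ᵥ M *ᵥ r₃ = M 2 3).image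
    fun r₃ ↦ of ![r₀, r₁, r₂, r₃]

lemma mem_isometries {U : Matrix (Fin 4) (Fin 4) ℤ} : U ∈ isometries ↔ U * M * Uᵀ = M := by
  have hnorm : ∀ i, -4 ≤ M i i := by decide
  simp only [isometries, Finset.mem_biUnion, Finset.mem_filter, Finset.mem_image,
    mem_vectorsOfNorm (hnorm _), isSymm_M.mul_mul_transpose_eq_iff]
  constructor
  · rintro ⟨r₀, h₀₀, r₁, ⟨h₁₁, h₀₁⟩, r₂, ⟨h₂₂, h₀₂, h₁₂⟩, r₃, ⟨h₃₃, h₀₃, h₁₃, h₂₃⟩, rfl⟩ i j hij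
    fin_cases i <;> fin_cases j <;> first | assumption | exact absurd hij (by decide)
  · intro h
    refine ⟨U 0, h 0 0 le_rfl, U 1, ⟨h 1 1 le_rfl, h 0 1 (by decide)⟩, U 2, ⟨h 2 2 le_rfl,
      h 0 2 (by decide), h 1 2 (by decide)⟩, U 3, ⟨h 3 3 le_rfl, h 0 3 (by decide),
      h 1 3 (by decide), h 2 3 (by decide)⟩, ?_⟩
    ext i j
    fin_cases i <;> rfl

lemma card_isometries : isometries.card = 72 := by
  decide +kernel

theorem card_orthogonal_group_of_R :
    Nat.card {U : Matrix (Fin 4) (Fin 4) ℤ // U * M * Uᵀ = M} = 72 := by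
  rw [← card_isometries, ← Nat.card_eq_finsetCard]
  exact Nat.card_congr (Equiv.subtypeEquivRight fun _ ↦ mem_isometries.symm)
end
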